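/- arXiv:1608.05466 — 2 statements merged into one kernel-verified Lean document; each statement's English description precedes it below -/
import Mathlib

section
/- Let S = {a, b, c, d}. There is no linear order < on S such that (i) for the map with fibers P_1 = {{a,d},{b,c}} and some order on its image, < is the composition-induced order, and (ii) for the map with fibers P_2 = {{a,b},{c,d}} and some order on its image, < is the composition-induced order, where a < d, b < c within P_1-fibers and a < b, d < c within P_2-fibers. -/
/-- There is no (strict) linear order on a four-element set `{a,b,c,d}` compatible with
both composition-induced orderings coming from:
partition `P₁ = {{a,d},{b,c}}` with fiber orders `a < d`, `b < c`, and
partition `P₂ = {{a,b},{c,d}}` with fiber orders `a < b`, `d < c`.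
Compatibility with a partition means: within each fiber the order agrees with the given
fiber order, and across the two fibers the order is determined by some order on the
image, i.e. one fiber lies entirely below the other. -/
theorem no_common_compatible_order {α : Type*} (a b c d : α)
    (hab : a ≠ b) (hac : a ≠ c) (had : a ≠ d)
    (hbc : b ≠ c) (hbd : b ≠ d) (hcd : c ≠ d) :
    ¬ ∃ lt : α → α → Prop,
      -- strict linear order on {a,b,c,d}
      (∀ x, ¬ lt x x) ∧
      (∀ x y z, lt x y → lt y z → lt x z) ∧
      (∀ x y, (x = a ∨ x = b ∨ x = c ∨ x = d) → (y = a ∨ y = b ∨ y = c ∨ y = d) →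
        x ≠ y → lt x y ∨ lt y x) ∧
      -- compatibility with P₁ = {{a,d},{b,c}}, fiber orders a < d and b < c
      lt a d ∧ lt b c ∧
      ((lt a b ∧ lt a c ∧ lt d b ∧ lt d c) ∨ (lt b a ∧ lt b d ∧ lt c a ∧ lt c d)) ∧
      -- compatibility with P₂ = {{a,b},{c,d}}, fiber orders a < b and d < c
      lt a b ∧ lt d c ∧
      ((lt a c ∧ lt a d ∧ lt b c ∧ lt b d) ∨ (lt c a ∧ lt c b ∧ lt d a ∧ lt d b)) := by
  rintro ⟨lt, hirr, htr, -, -, hbc', h1, hab', -, h2⟩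
  rcases h1 with ⟨-, -, hdb, -⟩ | ⟨hba, -, -, -⟩
  · rcases h2 with ⟨-, -, -, hbd⟩ | ⟨-, hcb, -, -⟩
    · exact hirr b (htr _ _ _ hbd hdb)
    · exact hirr b (htr _ _ _ hbc' hcb)
  · exact hirr a (htr _ _ _ hab' hba)
end

section
/- Every pointed simplicial set that admits a cyclic ordering admits an NNCMO: the cyclic ordering, restricted to fibers of compositions of face maps (over non-basepoint simplices), gives fiber orderings such that for any factorization g∘f of a composite of face maps, the composition induced ordering agrees with the (g∘f)-ordering on all fibers over non-basepoint simplices. -/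
open CategoryTheory Opposite

/-- A pointed simplicial set: a simplicial set together with a basepoint simplex in each
degree, compatible with all simplicial structure maps. -/
structure PointedSSet where
  X : SSet
  pt : ∀ n : SimplexCategoryᵒᵖ, X.obj n
  pt_map : ∀ {n n' : SimplexCategoryᵒᵖ} (f : n ⟶ n'), X.map f (pt n) = pt n'

/-- An `f`-ordering: a relation `r` on the domain of `f` which only relates elements of
a common fiber of `f` and restricts to a strict linear order on each fiber of `f`. -/
def IsFiberLinearOrder {α β : Type*} (f : α → β) (r : α → α → Prop) : Prop :=
  (∀ x y, r x y → f x = f y) ∧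
  (∀ x, ¬ r x x) ∧
  (∀ x y z, r x y → r y z → r x z) ∧
  (∀ x y, f x = f y → x ≠ y → r x y ∨ r y x)

/-- The composition induced relation on fibers of `g ∘ f`. -/
def compInduced {α β : Type*} (f : α → β) (rf : α → α → Prop) (rg : β → β → Prop) :
    α → α → Prop :=
  fun x y => (f x = f y ∧ rf x y) ∨ (f x ≠ f y ∧ rg (f x) (f y))

/-- A pointed simplicial set admits a not necessarily commutative multiplicative
ordering (NNCMO) if there is a choice, for every composition of face maps (i.e. every
monomorphism of the simplex category), of a linear order on each fiber, such that for
every factorization of a composition of face maps, the composition induced ordering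
agrees with the chosen ordering on all fibers over non-basepoint simplices. -/
def PointedSSet.AdmitsNNCMO (Y : PointedSSet) : Prop :=
  ∃ R : ∀ (a b : SimplexCategory), (a ⟶ b) →
      (Y.X.obj (op b) → Y.X.obj (op b) → Prop),
    (∀ (a b : SimplexCategory) (f : a ⟶ b), Mono f →
      IsFiberLinearOrder (Y.X.map f.op) (R a b f)) ∧
    (∀ (a b c : SimplexCategory) (u : a ⟶ b) (v : b ⟶ c), Mono u → Mono v →
      ∀ x y : Y.X.obj (op c),
        Y.X.map (u ≫ v).op x = Y.X.map (u ≫ v).op y →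
        Y.X.map (u ≫ v).op x ≠ Y.pt (op a) →
        (R a c (u ≫ v) x y ↔ compInduced (Y.X.map v.op) (R b c v) (R a b u) x y))

/-- A simplex is degenerate if it is in the image of some degeneracy map. -/
def PointedSSet.Degenerate (Y : PointedSSet) {n : ℕ}
    (x : Y.X.obj (op (SimplexCategory.mk (n + 1)))) : Prop :=
  ∃ (i : Fin (n + 1)) (y : Y.X.obj (op (SimplexCategory.mk n))), x = Y.X.σ i y

/-- A pointed simplicial set is one dimensional if every simplex of dimension at least
`2` is degenerate. -/
def PointedSSet.OneDimensional (Y : PointedSSet) : Prop :=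
  ∀ (n : ℕ) (x : Y.X.obj (op (SimplexCategory.mk (n + 2)))), Y.Degenerate x

/-- `lt` is a cyclic ordering on the pointed simplicial set `Y`: in every positive
degree, `lt` is a strict linear order on the nonbasepoint simplices, and for `n ≥ 2`,
`σ < τ` implies `d_i(σ) ≤ d_i(τ)` for all `i`, where the basepoint is taken to be the
minimum of each degree. -/
def PointedSSet.IsCyclicOrdering (Y : PointedSSet)
    (lt : ∀ n : ℕ, Y.X.obj (op (SimplexCategory.mk n)) →
      Y.X.obj (op (SimplexCategory.mk n)) → Prop) : Prop :=
  (∀ n, 1 ≤ n →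
    (∀ x, ¬ lt n x x) ∧
    (∀ x y z, lt n x y → lt n y z → lt n x z) ∧
    (∀ x y, lt n x y →
      x ≠ Y.pt (op (SimplexCategory.mk n)) ∧ y ≠ Y.pt (op (SimplexCategory.mk n))) ∧
    (∀ x y, x ≠ Y.pt (op (SimplexCategory.mk n)) → y ≠ Y.pt (op (SimplexCategory.mk n)) →
      x ≠ y → lt n x y ∨ lt n y x)) ∧
  (∀ (m : ℕ) (i : Fin (m + 3)) (σ τ : Y.X.obj (op (SimplexCategory.mk (m + 2)))),
    lt (m + 2) σ τ →
      (Y.X.δ i σ = Y.pt (op (SimplexCategory.mk (m + 1))) ∨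
       Y.X.δ i σ = Y.X.δ i τ ∨
       lt (m + 1) (Y.X.δ i σ) (Y.X.δ i τ)))

/-- `Y` has a cyclic ordering. -/
def PointedSSet.HasCyclicOrdering (Y : PointedSSet) : Prop :=
  ∃ lt, Y.IsCyclicOrdering lt

/-! Order every fiber of a composite of face maps `X_c → X_b` by the cyclic ordering of `X_c`,
with the basepoint adjoined as minimum. The axiom of a cyclic ordering says that each `d_i`
into positive degree is weakly monotone for these orders, hence so is every composite of face
maps. Two simplices of a fiber of `g ∘ f` with distinct `f`-images are therefore ordered as
their images are, which is the composition induced ordering. -/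

def fiberRel {α β : Type*} (f : α → β) (r : α → α → Prop) : α → α → Prop :=
  fun x y => f x = f y ∧ r x y

theorem isFiberLinearOrder_fiberRel {α β : Type*} {f : α → β} {r : α → α → Prop}
    (irrefl : ∀ x, ¬ r x x) (trans : ∀ x y z, r x y → r y z → r x z)
    (total : ∀ x y, f x = f y → x ≠ y → r x y ∨ r y x) :
    IsFiberLinearOrder f (fiberRel f r) :=
  ⟨fun _ _ h => h.1, fun x h => irrefl x h.2,
    fun x y z hxy hyz => ⟨hxy.1.trans hyz.1, trans x y z hxy.2 hyz.2⟩,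
    fun x y hxy hne => (total x y hxy hne).imp (fun h => ⟨hxy, h⟩) (fun h => ⟨hxy.symm, h⟩)⟩

theorem compInduced_fiberRel_iff {α β γ : Type*} {g : α → β} {f : β → γ}
    {r : α → α → Prop} {s : β → β → Prop} {x y : α} (hxy : f (g x) = f (g y))
    (hrs : g x ≠ g y → (r x y ↔ s (g x) (g y))) :
    compInduced g (fiberRel g r) (fiberRel f s) x y ↔ fiberRel (f ∘ g) r x y := by
  by_cases hg : g x = g y
  · simp [compInduced, fiberRel, hg]
  · simp [compInduced, fiberRel, hg, hxy, hrs hg]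

theorem rel_iff_of_weaklyMonotone {α β : Type*} {r : α → α → Prop} {s : β → β → Prop}
    {g : α → β} (trichotomous : ∀ x y, r x y ∨ x = y ∨ r y x) (asymm : ∀ a b, s a b → ¬ s b a)
    (hg : ∀ x y, r x y → g x = g y ∨ s (g x) (g y)) {x y : α} (hne : g x ≠ g y) :
    r x y ↔ s (g x) (g y) := by
  refine ⟨fun h => (hg x y h).resolve_left hne, fun h => ?_⟩
  rcases trichotomous x y with hxy | rfl | hyx
  · exact hxy
  · exact absurd rfl hne
  · exact ((hg y x hyx).resolve_left (Ne.symm hne) |> asymm _ _ h).elim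

theorem SSet.map_injective_of_mono_of_len_eq_zero (X : SSet) {a b : SimplexCategory}
    (f : a ⟶ b) [Mono f] (hb : b.len = 0) : Function.Injective (X.map f.op) := by
  obtain rfl : a = b := SimplexCategory.ext (by have := SimplexCategory.len_le_of_mono f; omega)
  rw [SimplexCategory.eq_id_of_mono f, op_id, X.map_id]
  exact fun _ _ h => h

namespace PointedSSet

variable {Y : PointedSSet}
  {lt : ∀ n : ℕ, Y.X.obj (op (SimplexCategory.mk n)) → Y.X.obj (op (SimplexCategory.mk n)) → Prop}

variable (Y lt) in
/-- `lt` with the basepoint adjoined as minimum. In degree `0`, where a cyclic ordering imposes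
nothing, it is empty: monomorphisms into `[0]` are identities, so their fibers are singletons. -/
def ptBotLT : ∀ n : ℕ, Y.X.obj (op (SimplexCategory.mk n)) →
    Y.X.obj (op (SimplexCategory.mk n)) → Prop
  | 0 => fun _ _ => False
  | n + 1 => fun x y =>
      (x = Y.pt (op (SimplexCategory.mk (n + 1))) ∧ y ≠ Y.pt (op (SimplexCategory.mk (n + 1)))) ∨
        lt (n + 1) x y

namespace IsCyclicOrdering

variable (hlt : Y.IsCyclicOrdering lt)
include hlt

theorem ptBotLT_irrefl : ∀ (n : ℕ) (x), ¬ Y.ptBotLT lt n x x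
  | 0, _, h => h
  | n + 1, x, h => h.elim (fun h => h.2 h.1) ((hlt.1 (n + 1) n.succ_pos).1 x)

theorem ptBotLT_trans : ∀ (n : ℕ) (x y z),
    Y.ptBotLT lt n x y → Y.ptBotLT lt n y z → Y.ptBotLT lt n x z
  | 0, _, _, _, h, _ => h.elim
  | n + 1, x, y, z, hxy, hyz => by
    obtain ⟨-, trans, ne_pt, -⟩ := hlt.1 (n + 1) n.succ_pos
    rcases hxy with ⟨hx, hy⟩ | hxy <;> rcases hyz with ⟨hy', -⟩ | hyz
    · exact absurd hy' hy
    · exact Or.inl ⟨hx, (ne_pt y z hyz).2⟩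
    · exact absurd hy' (ne_pt x y hxy).2
    · exact Or.inr (trans x y z hxy hyz)

theorem ptBotLT_asymm (n : ℕ) (x y) (h : Y.ptBotLT lt n x y) : ¬ Y.ptBotLT lt n y x :=
  fun h' => ptBotLT_irrefl hlt n x (ptBotLT_trans hlt n x y x h h')

theorem ptBotLT_trichotomous {n : ℕ} (hn : n ≠ 0) (x y) :
    Y.ptBotLT lt n x y ∨ x = y ∨ Y.ptBotLT lt n y x := by
  obtain ⟨n, rfl⟩ := Nat.exists_eq_add_one_of_ne_zero hn
  by_cases hx : x = Y.pt _
  · by_cases hy : y = Y.pt _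
    · exact Or.inr (Or.inl (hx.trans hy.symm))
    · exact Or.inl (Or.inl ⟨hx, hy⟩)
  by_cases hy : y = Y.pt _
  · exact Or.inr (Or.inr (Or.inl ⟨hy, hx⟩))
  by_cases hxy : x = y
  · exact Or.inr (Or.inl hxy)
  rcases (hlt.1 (n + 1) n.succ_pos).2.2.2 x y hx hy hxy with h | h
  · exact Or.inl (Or.inr h)
  · exact Or.inr (Or.inr (Or.inr h))

theorem ptBotLT_δ {k : ℕ} (i : Fin (k + 3)) {x y} (h : Y.ptBotLT lt (k + 2) x y) :
    Y.X.δ i x = Y.X.δ i y ∨ Y.ptBotLT lt (k + 1) (Y.X.δ i x) (Y.X.δ i y) := by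
  have weak : Y.X.δ i x = Y.pt _ ∨ Y.X.δ i x = Y.X.δ i y ∨ lt (k + 1) (Y.X.δ i x) (Y.X.δ i y) := by
    rcases h with ⟨rfl, -⟩ | h
    · exact Or.inl (Y.pt_map _)
    · exact hlt.2 k i x y h
  rcases weak with hx | heq | h
  · by_cases hy : Y.X.δ i y = Y.pt _
    · exact Or.inl (hx.trans hy.symm)
    · exact Or.inr (Or.inl ⟨hx, hy⟩)
  · exact Or.inl heq
  · exact Or.inr (Or.inr h)

theorem ptBotLT_map_of_mono {b c : SimplexCategory} (v : b ⟶ c) [Mono v] (hb : b.len ≠ 0)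
    {x y} (h : Y.ptBotLT lt c.len x y) :
    Y.X.map v.op x = Y.X.map v.op y ∨ Y.ptBotLT lt b.len (Y.X.map v.op x) (Y.X.map v.op y) := by
  induction hc : c.len using Nat.strong_induction_on generalizing c with
  | _ m ih =>
  obtain rfl : c = SimplexCategory.mk m := hc ▸ rfl
  by_cases hbc : b = SimplexCategory.mk m
  · subst hbc
    rw [SimplexCategory.eq_id_of_mono v, op_id, Y.X.map_id]
    exact Or.inr h
  have hlen : b.len < m := SimplexCategory.len_lt_of_mono v (Ne.symm hbc)
  obtain ⟨k, rfl⟩ : ∃ k, m = k + 2 := ⟨m - 2, by omega⟩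
  have not_surj : ¬ Function.Surjective v.toOrderHom := fun hs => by
    have := Fintype.card_le_of_surjective _ hs
    simp only [Fintype.card_fin, SimplexCategory.len_mk] at this
    omega
  obtain ⟨i, v', rfl⟩ := SimplexCategory.eq_comp_δ_of_not_surjective v not_surj
  have : Mono v' := mono_of_mono v' (SimplexCategory.δ i)
  simp only [op_comp, Functor.map_comp_apply]
  rcases ptBotLT_δ hlt i h with heq | hδ
  · exact Or.inl (congrArg _ heq)
  · exact ih (k + 1) (by omega) v' hδ rfl

end IsCyclicOrdering

end PointedSSet

/-- Every pointed simplicial set that admits a cyclic ordering admits an NNCMO. -/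
theorem cyclicOrdering_admitsNNCMO (Y : PointedSSet) (h : Y.HasCyclicOrdering) :
    Y.AdmitsNNCMO := by
  obtain ⟨lt, hlt⟩ := h
  refine ⟨fun _ b f => fiberRel (Y.X.map f.op) (Y.ptBotLT lt b.len), fun _ b f _ => ?_,
    fun _ b c u v _ _ x y hxy _ => ?_⟩
  · refine isFiberLinearOrder_fiberRel (hlt.ptBotLT_irrefl _) (hlt.ptBotLT_trans _)
      fun x y hxy hne => ?_
    have hb : b.len ≠ 0 := fun hb => hne (Y.X.map_injective_of_mono_of_len_eq_zero f hb hxy)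
    exact (hlt.ptBotLT_trichotomous hb x y).imp_right (Or.resolve_left · hne)
  · have hcomp : ⇑(Y.X.map (u ≫ v).op) = Y.X.map u.op ∘ Y.X.map v.op := by
      rw [op_comp, Functor.map_comp]
      rfl
    beta_reduce
    rw [hcomp] at hxy ⊢
    refine (compInduced_fiberRel_iff hxy fun hne => ?_).symm
    have hb : b.len ≠ 0 := fun hb => hne (Y.X.map_injective_of_mono_of_len_eq_zero u hb hxy)
    have hc : c.len ≠ 0 := by have := SimplexCategory.len_le_of_mono v; omega
    exact rel_iff_of_weaklyMonotone (hlt.ptBotLT_trichotomous hc) (hlt.ptBotLT_asymm _)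
      (fun _ _ => hlt.ptBotLT_map_of_mono v hb) hne
end
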